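/- arXiv:2402.05846 — 6 statements merged into one kernel-verified Lean document; each statement's English description precedes it below -/
import Mathlib

section
/- Let S be a semigroup. If the L-height H_L(S) is finite, then S is left stable; dually, if the R-height H_R(S) is finite, then S is right stable. Consequently, if both H_L(S) and H_R(S) are finite, then S is stable. -/
namespace GreenHeights

universe u

section Defs

variable {S : Type u} [Semigroup S]

/-- Green's preorder `≤_L`: `a ≤_L b` iff `a = s * b` for some `s ∈ S¹`
(i.e. `a = b` or `a = s * b` for some `s ∈ S`). -/
def leL (a b : S) : Prop := a = b ∨ ∃ s : S, a = s * b

/-- Green's preorder `≤_R`: `a ≤_R b` iff `a = b * s` for some `s ∈ S¹`. -/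
def leR (a b : S) : Prop := a = b ∨ ∃ s : S, a = b * s

/-- Green's preorder `≤_J`: `a ≤_J b` iff `a = s * b * t` for some `s, t ∈ S¹`. -/
def leJ (a b : S) : Prop :=
  a = b ∨ (∃ s : S, a = s * b) ∨ (∃ t : S, a = b * t) ∨ ∃ s t : S, a = s * b * t

/-- Green's preorder `≤_H`. -/
def leH (a b : S) : Prop := leL a b ∧ leR a b

/-- Green's relation `L`. -/
def eqvL (a b : S) : Prop := leL a b ∧ leL b a

/-- Green's relation `R`. -/
def eqvR (a b : S) : Prop := leR a b ∧ leR b a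

/-- Green's relation `J`. -/
def eqvJ (a b : S) : Prop := leJ a b ∧ leJ b a

/-- Green's relation `H`. -/
def eqvH (a b : S) : Prop := leH a b ∧ leH b a

/-- `a <_L b`. -/
def ltL (a b : S) : Prop := leL a b ∧ ¬ leL b a

/-- `a <_R b`. -/
def ltR (a b : S) : Prop := leR a b ∧ ¬ leR b a

/-- `a <_J b`. -/
def ltJ (a b : S) : Prop := leJ a b ∧ ¬ leJ b a

/-- `a <_H b`. -/
def ltH (a b : S) : Prop := leH a b ∧ ¬ leH b a

end Defs

/-- The set of lengths of strictly decreasing chains with respect to a relation `lt`: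
`m` is a chain length if there is a sequence `c 0 >' c 1 >' … >' c (m-1)`. -/
def chainLengths {T : Type u} (lt : T → T → Prop) : Set ℕ :=
  {m | ∃ c : Fin m → T, ∀ i j : Fin m, i < j → lt (c j) (c i)}

/-- The height: the supremum, in `ℕ∞`, of the lengths of strictly decreasing chains. -/
noncomputable def heightOf {T : Type u} (lt : T → T → Prop) : ℕ∞ :=
  ⨆ m ∈ chainLengths lt, (m : ℕ∞)

/-- The `L`-height of a semigroup. -/
noncomputable def HL (S : Type u) [Semigroup S] : ℕ∞ := heightOf (ltL (S := S))

/-- The `R`-height of a semigroup. -/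
noncomputable def HR (S : Type u) [Semigroup S] : ℕ∞ := heightOf (ltR (S := S))

/-- The `J`-height of a semigroup. -/
noncomputable def HJ (S : Type u) [Semigroup S] : ℕ∞ := heightOf (ltJ (S := S))

/-- The `H`-height of a semigroup. -/
noncomputable def HH (S : Type u) [Semigroup S] : ℕ∞ := heightOf (ltH (S := S))

/-- `S` is left stable if `a ≤_L b` and `a J b` imply `a L b`. -/
def LeftStable (S : Type u) [Semigroup S] : Prop :=
  ∀ a b : S, leL a b → eqvJ a b → eqvL a b

/-- `S` is right stable if `a ≤_R b` and `a J b` imply `a R b`. -/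
def RightStable (S : Type u) [Semigroup S] : Prop :=
  ∀ a b : S, leR a b → eqvJ a b → eqvR a b

/-- `S` is stable if it is both left and right stable. -/
def Stable (S : Type u) [Semigroup S] : Prop := LeftStable S ∧ RightStable S


section Lemmas
variable {S : Type u} [Semigroup S]

lemma leL_refl (a : S) : leL a a := Or.inl rfl

lemma leL_trans {a b c : S} (h1 : leL a b) (h2 : leL b c) : leL a c := by
  rcases h1 with rfl | ⟨s, rfl⟩ <;> rcases h2 with rfl | ⟨t, rfl⟩
  · exact Or.inl rfl
  · exact Or.inr ⟨t, rfl⟩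
  · exact Or.inr ⟨s, rfl⟩
  · exact Or.inr ⟨s * t, (mul_assoc s t c).symm⟩

lemma leR_refl (a : S) : leR a a := Or.inl rfl

lemma leR_trans {a b c : S} (h1 : leR a b) (h2 : leR b c) : leR a c := by
  rcases h1 with rfl | ⟨s, rfl⟩ <;> rcases h2 with rfl | ⟨t, rfl⟩
  · exact Or.inl rfl
  · exact Or.inr ⟨t, rfl⟩
  · exact Or.inr ⟨s, rfl⟩
  · exact Or.inr ⟨t * s, mul_assoc c t s⟩

end Lemmas

lemma height_top {T : Type u} {lt : T → T → Prop}
    (h : ∀ m : ℕ, m ∈ chainLengths lt) : heightOf lt = ⊤ := by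
  have hle : ∀ m : ℕ, (m : ℕ∞) ≤ heightOf lt := fun m =>
    le_iSup₂ (f := fun m (_ : m ∈ chainLengths lt) => (m : ℕ∞)) m (h m)
  by_contra hne
  obtain ⟨n, hn⟩ := WithTop.ne_top_iff_exists.mp hne
  have := hle (n + 1)
  rw [← hn] at this
  exact absurd (Nat.cast_le.mp this) (by omega)

/-- Core lemma: if `b = q*b*y` and the L-height is finite, then `b ≤_L q*b`. -/
lemma core_L {S : Type u} [Semigroup S] (h : HL S < ⊤) (q y b : S)
    (hb : b = q * b * y) : leL b (q * b) := by
  by_contra hnot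
  set c : ℕ → S := fun n => Nat.rec b (fun _ x => q * x) n with hc
  have hcs : ∀ n, c (n + 1) = q * c n := fun n => rfl
  have hP : ∀ n, b = c n ∨ ∃ w, b = c n * w := by
    intro n
    induction n with
    | zero => exact Or.inl rfl
    | succ n ih =>
      rcases ih with hbn | ⟨w, hbn⟩
      · exact Or.inr ⟨y, by
          calc b = q * b * y := hb
          _ = q * c n * y := by rw [← hbn]
          _ = c (n+1) * y := by rw [hcs]⟩
      · exact Or.inr ⟨w * y, by
          calc b = q * b * y := hb
          _ = q * (c n * w) * y := by rw [← hbn]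
          _ = (q * c n) * w * y := by rw [mul_assoc q (c n) w]
          _ = (q * c n) * (w * y) := by rw [mul_assoc]
          _ = c (n+1) * (w * y) := by rw [hcs]⟩
  have hstep : ∀ n, ¬ leL (c n) (c (n + 1)) := by
    intro n hle
    apply hnot
    rcases hP n with hbn | ⟨w, hbn⟩
    · rcases hle with he | ⟨z, he⟩
      · exact Or.inl (by
          calc b = c n := hbn
          _ = c (n+1) := he
          _ = q * c n := hcs n
          _ = q * b := by rw [← hbn])
      · exact Or.inr ⟨z, by
          calc b = c n := hbn
          _ = z * c (n+1) := he
          _ = z * (q * c n) := by rw [hcs]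
          _ = z * (q * b) := by rw [← hbn]⟩
    · rcases hle with he | ⟨z, he⟩
      · exact Or.inl (by
          calc b = c n * w := hbn
          _ = c (n+1) * w := by rw [← he]
          _ = q * c n * w := by rw [hcs]
          _ = q * (c n * w) := mul_assoc _ _ _
          _ = q * b := by rw [← hbn])
      · exact Or.inr ⟨z, by
          calc b = c n * w := hbn
          _ = (z * c (n+1)) * w := by rw [← he]
          _ = (z * (q * c n)) * w := by rw [hcs]
          _ = z * ((q * c n) * w) := mul_assoc _ _ _
          _ = z * (q * (c n * w)) := by rw [mul_assoc q (c n) w]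
          _ = z * (q * b) := by rw [← hbn]⟩
  have hdesc : ∀ i k : ℕ, leL (c (i + k)) (c i) := by
    intro i k
    induction k with
    | zero => exact leL_refl _
    | succ k ih => exact leL_trans (Or.inr ⟨q, (hcs (i+k)).symm ▸ rfl⟩) ih
  have hchain : ∀ m : ℕ, m ∈ chainLengths (ltL (S := S)) := by
    intro m
    refine ⟨fun i => c i, fun i j hij => ⟨?_, ?_⟩⟩
    · have := hdesc i (j - i)
      rwa [Nat.add_sub_cancel' (le_of_lt hij)] at this
    · intro hle
      have h1 : leL (c j) (c (i+1)) := by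
        have := hdesc (i+1) (j - (i+1))
        rwa [Nat.add_sub_cancel' hij] at this
      exact hstep i (leL_trans hle h1)
  have := height_top hchain
  rw [HL] at h
  exact absurd this h.ne

/-- Core lemma: if `b = y*b*q` and the R-height is finite, then `b ≤_R b*q`. -/
lemma core_R {S : Type u} [Semigroup S] (h : HR S < ⊤) (q y b : S)
    (hb : b = y * b * q) : leR b (b * q) := by
  by_contra hnot
  set c : ℕ → S := fun n => Nat.rec b (fun _ x => x * q) n with hc
  have hcs : ∀ n, c (n + 1) = c n * q := fun n => rfl
  have hb' : b = y * (b * q) := by rw [← mul_assoc]; exact hb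
  have hP : ∀ n, b = c n ∨ ∃ w, b = w * c n := by
    intro n
    induction n with
    | zero => exact Or.inl rfl
    | succ n ih =>
      rcases ih with hbn | ⟨w, hbn⟩
      · exact Or.inr ⟨y, by
          calc b = y * (b * q) := hb'
          _ = y * (c n * q) := by rw [← hbn]
          _ = y * c (n+1) := by rw [hcs]⟩
      · exact Or.inr ⟨y * w, by
          calc b = y * (b * q) := hb'
          _ = y * ((w * c n) * q) := by rw [← hbn]
          _ = y * (w * (c n * q)) := by rw [mul_assoc w (c n) q]
          _ = (y * w) * (c n * q) := by rw [mul_assoc]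
          _ = (y * w) * c (n+1) := by rw [hcs]⟩
  have hstep : ∀ n, ¬ leR (c n) (c (n + 1)) := by
    intro n hle
    apply hnot
    rcases hP n with hbn | ⟨w, hbn⟩
    · rcases hle with he | ⟨z, he⟩
      · exact Or.inl (by
          calc b = c n := hbn
          _ = c (n+1) := he
          _ = c n * q := hcs n
          _ = b * q := by rw [← hbn])
      · exact Or.inr ⟨z, by
          calc b = c n := hbn
          _ = c (n+1) * z := he
          _ = (c n * q) * z := by rw [hcs]
          _ = (b * q) * z := by rw [← hbn]⟩
    · rcases hle with he | ⟨z, he⟩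
      · exact Or.inl (by
          calc b = w * c n := hbn
          _ = w * c (n+1) := by rw [← he]
          _ = w * (c n * q) := by rw [hcs]
          _ = (w * c n) * q := (mul_assoc _ _ _).symm
          _ = b * q := by rw [← hbn])
      · exact Or.inr ⟨z, by
          calc b = w * c n := hbn
          _ = w * (c (n+1) * z) := by rw [← he]
          _ = w * ((c n * q) * z) := by rw [hcs]
          _ = (w * (c n * q)) * z := (mul_assoc _ _ _).symm
          _ = ((w * c n) * q) * z := by rw [mul_assoc w (c n) q]
          _ = (b * q) * z := by rw [← hbn]⟩
  have hdesc : ∀ i k : ℕ, leR (c (i + k)) (c i) := by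
    intro i k
    induction k with
    | zero => exact leR_refl _
    | succ k ih => exact leR_trans (Or.inr ⟨q, (hcs (i+k)).symm ▸ rfl⟩) ih
  have hchain : ∀ m : ℕ, m ∈ chainLengths (ltR (S := S)) := by
    intro m
    refine ⟨fun i => c i, fun i j hij => ⟨?_, ?_⟩⟩
    · have := hdesc i (j - i)
      rwa [Nat.add_sub_cancel' (le_of_lt hij)] at this
    · intro hle
      have h1 : leR (c j) (c (i+1)) := by
        have := hdesc (i+1) (j - (i+1))
        rwa [Nat.add_sub_cancel' hij] at this
      exact hstep i (leR_trans hle h1)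
  have := height_top hchain
  rw [HR] at h
  exact absurd this h.ne

lemma leftStable_of_HL {S : Type u} [Semigroup S] (h : HL S < ⊤) : LeftStable S := by
  intro a b hL hJ
  refine ⟨hL, ?_⟩
  rcases hL with rfl | ⟨u, rfl⟩
  · exact leL_refl _
  rcases hJ.2 with he | ⟨x, he⟩ | ⟨y, he⟩ | ⟨x, y, he⟩
  · exact Or.inl he
  · exact Or.inr ⟨x, he⟩
  · -- b = (u * b) * y
    have hb : b = u * b * y := he
    exact core_L h u y b hb
  · -- b = x * (u * b) * y
    have hb : b = (x * u) * b * y := by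
      calc b = x * (u * b) * y := he
      _ = (x * u) * b * y := by rw [mul_assoc x u b]
    have h1 : leL b ((x * u) * b) := core_L h (x * u) y b hb
    have h2 : leL ((x * u) * b) (u * b) := Or.inr ⟨x, mul_assoc x u b⟩
    exact leL_trans h1 h2

lemma rightStable_of_HR {S : Type u} [Semigroup S] (h : HR S < ⊤) : RightStable S := by
  intro a b hR hJ
  refine ⟨hR, ?_⟩
  rcases hR with rfl | ⟨u, rfl⟩
  · exact leR_refl _
  rcases hJ.2 with he | ⟨x, he⟩ | ⟨y, he⟩ | ⟨x, y, he⟩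
  · exact Or.inl he
  · -- b = x * (b * u)
    have hb : b = x * b * u := by
      calc b = x * (b * u) := he
      _ = x * b * u := (mul_assoc x b u).symm
    exact core_R h u x b hb
  · exact Or.inr ⟨y, he⟩
  · -- b = x * (b * u) * y
    have hb : b = x * b * (u * y) := by
      calc b = x * (b * u) * y := he
      _ = (x * b * u) * y := by rw [mul_assoc x b u]
      _ = (x * b) * (u * y) := mul_assoc _ _ _
    have h1 : leR b (b * (u * y)) := core_R h (u * y) x b hb
    have h2 : leR (b * (u * y)) (b * u) := Or.inr ⟨y, (mul_assoc b u y).symm⟩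
    exact leR_trans h1 h2

/-- If `H_L(S)` is finite then `S` is left stable; if `H_R(S)` is finite then
`S` is right stable; consequently if both are finite then `S` is stable. -/
theorem finite_height_implies_stable (S : Type u) [Semigroup S] :
    (HL S < ⊤ → LeftStable S) ∧
    (HR S < ⊤ → RightStable S) ∧
    (HL S < ⊤ → HR S < ⊤ → Stable S) := by
  exact ⟨leftStable_of_HL, rightStable_of_HR,
    fun h1 h2 => ⟨leftStable_of_HL h1, rightStable_of_HR h2⟩⟩

end GreenHeights
end

section
/- Let S be a semigroup. (1) If S is left stable, then for all a,b ∈ S: a <_H b implies a <_R b, and a <_L b implies a <_J b; consequently H_H(S) ≤ H_R(S) and H_L(S) ≤ H_J(S). (2) If S is right stable, then a <_H b implies a <_L b, and a <_R b implies a <_J b; consequently H_H(S) ≤ H_L(S) and H_R(S) ≤ H_J(S). (3) If S is stable, then H_H(S) ≤ min(H_L(S), H_R(S)) and max(H_L(S), H_R(S)) ≤ H_J(S) (inequalities in ℕ ∪ {∞}). -/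
namespace GreenHeights

universe u

theorem leL_leJ {S : Type u} [Semigroup S] {a b : S} (h : leL a b) : leJ a b := by
  rcases h with h | h
  · exact Or.inl h
  · exact Or.inr (Or.inl h)

theorem leR_leJ {S : Type u} [Semigroup S] {a b : S} (h : leR a b) : leJ a b := by
  rcases h with h | h
  · exact Or.inl h
  · exact Or.inr (Or.inr (Or.inl h))

theorem heightOf_mono {T : Type u} {lt1 lt2 : T → T → Prop}
    (h : ∀ a b, lt1 a b → lt2 a b) : heightOf lt1 ≤ heightOf lt2 := by
  refine iSup₂_le fun m hm => ?_
  obtain ⟨c, hc⟩ := hm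
  exact le_iSup₂ (f := fun m (_ : m ∈ chainLengths lt2) => (m : ℕ∞)) m
    ⟨c, fun i j hij => h _ _ (hc i j hij)⟩

theorem ls_ltH_ltR {S : Type u} [Semigroup S] (hLS : LeftStable S)
    {a b : S} (h : ltH a b) : ltR a b := by
  obtain ⟨⟨hL, hR⟩, hn⟩ := h
  refine ⟨hR, fun hba => ?_⟩
  have hJ : eqvJ a b := ⟨leR_leJ hR, leR_leJ hba⟩
  exact hn ⟨(hLS a b hL hJ).2, hba⟩

theorem ls_ltL_ltJ {S : Type u} [Semigroup S] (hLS : LeftStable S)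
    {a b : S} (h : ltL a b) : ltJ a b := by
  obtain ⟨hL, hn⟩ := h
  refine ⟨leL_leJ hL, fun hba => ?_⟩
  exact hn (hLS a b hL ⟨leL_leJ hL, hba⟩).2

theorem rs_ltH_ltL {S : Type u} [Semigroup S] (hRS : RightStable S)
    {a b : S} (h : ltH a b) : ltL a b := by
  obtain ⟨⟨hL, hR⟩, hn⟩ := h
  refine ⟨hL, fun hba => ?_⟩
  have hJ : eqvJ a b := ⟨leL_leJ hL, leL_leJ hba⟩
  exact hn ⟨hba, (hRS a b hR hJ).2⟩

theorem rs_ltR_ltJ {S : Type u} [Semigroup S] (hRS : RightStable S)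
    {a b : S} (h : ltR a b) : ltJ a b := by
  obtain ⟨hR, hn⟩ := h
  refine ⟨leR_leJ hR, fun hba => ?_⟩
  exact hn (hRS a b hR ⟨leR_leJ hR, hba⟩).2

/-- Chain comparisons under one-sided stability, and the resulting
inequalities between the four Green heights. -/
theorem stable_height_inequalities (S : Type u) [Semigroup S] :
    (LeftStable S →
      (∀ a b : S, ltH a b → ltR a b) ∧
      (∀ a b : S, ltL a b → ltJ a b) ∧
      HH S ≤ HR S ∧ HL S ≤ HJ S) ∧
    (RightStable S →
      (∀ a b : S, ltH a b → ltL a b) ∧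
      (∀ a b : S, ltR a b → ltJ a b) ∧
      HH S ≤ HL S ∧ HR S ≤ HJ S) ∧
    (Stable S →
      (∀ a b : S, ltH a b → ltL a b ∧ ltR a b) ∧
      (∀ a b : S, ltL a b → ltJ a b) ∧ (∀ a b : S, ltR a b → ltJ a b) ∧
      HH S ≤ min (HL S) (HR S) ∧ max (HL S) (HR S) ≤ HJ S) := by
  refine ⟨fun hLS => ?_, fun hRS => ?_, fun hSt => ?_⟩
  · exact ⟨fun a b h => ls_ltH_ltR hLS h, fun a b h => ls_ltL_ltJ hLS h,
      heightOf_mono fun a b h => ls_ltH_ltR hLS h,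
      heightOf_mono fun a b h => ls_ltL_ltJ hLS h⟩
  · exact ⟨fun a b h => rs_ltH_ltL hRS h, fun a b h => rs_ltR_ltJ hRS h,
      heightOf_mono fun a b h => rs_ltH_ltL hRS h,
      heightOf_mono fun a b h => rs_ltR_ltJ hRS h⟩
  · obtain ⟨hLS, hRS⟩ := hSt
    exact ⟨fun a b h => ⟨rs_ltH_ltL hRS h, ls_ltH_ltR hLS h⟩,
      fun a b h => ls_ltL_ltJ hLS h, fun a b h => rs_ltR_ltJ hRS h,
      le_min (heightOf_mono fun a b h => rs_ltH_ltL hRS h)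
        (heightOf_mono fun a b h => ls_ltH_ltR hLS h),
      max_le (heightOf_mono fun a b h => ls_ltL_ltJ hLS h)
        (heightOf_mono fun a b h => rs_ltR_ltJ hRS h)⟩

end GreenHeights
end

section
/- For a semigroup S: (1) H_L(S) = 1 if and only if H_J(S) = 1 and S is left stable; (2) H_R(S) = 1 if and only if H_J(S) = 1 and S is right stable. -/
namespace GreenHeights

universe u

/-! If `≤_L` has no strict pairs, then `x * b ≤_L b` forces `b = v * x * b`, so every element lies
`J`-below every other: `S` is `J`-simple and `H_J(S) = 1`. Left stability then says exactly that
`L` coincides with `≤_L` inside the single `J`-class; conversely, if `H_J(S) = 1` then any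
`a ≤_L b` gives `a J b`, and left stability upgrades it to `a L b`. The `R` case is dual. -/

section Height

variable {T : Type u}

lemma le_heightOf {lt : T → T → Prop} {m : ℕ} (hm : m ∈ chainLengths lt) :
    (m : ℕ∞) ≤ heightOf lt :=
  le_biSup _ hm

lemma heightOf_le_iff {lt : T → T → Prop} {n : ℕ} :
    heightOf lt ≤ n ↔ ∀ m ∈ chainLengths lt, m ≤ n := by
  simp only [heightOf, iSup₂_le_iff, Nat.cast_le]

lemma one_mem_chainLengths (lt : T → T → Prop) (x : T) : 1 ∈ chainLengths lt :=
  ⟨fun _ => x, fun i j hij => absurd hij (Subsingleton.elim i j).not_lt⟩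

lemma two_mem_chainLengths {lt : T → T → Prop} {a b : T} (hab : lt a b) :
    2 ∈ chainLengths lt := by
  refine ⟨![b, a], fun i j hij => ?_⟩
  obtain rfl : i = 0 := by omega
  obtain rfl : j = 1 := by omega
  exact hab

lemma eq_zero_of_mem_chainLengths [IsEmpty T] {lt : T → T → Prop} {m : ℕ}
    (hm : m ∈ chainLengths lt) : m = 0 := by
  obtain ⟨c, -⟩ := hm
  by_contra hm0
  exact isEmptyElim (c ⟨0, Nat.pos_of_ne_zero hm0⟩)

lemma le_one_of_mem_chainLengths {lt : T → T → Prop} (hlt : ∀ a b, ¬ lt a b) {m : ℕ}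
    (hm : m ∈ chainLengths lt) : m ≤ 1 := by
  obtain ⟨c, hc⟩ := hm
  by_contra! hm1
  exact hlt _ _ (hc ⟨0, by omega⟩ ⟨1, hm1⟩ (by simp))

lemma heightOf_eq_one_iff (lt : T → T → Prop) :
    heightOf lt = 1 ↔ Nonempty T ∧ ∀ a b : T, ¬ lt a b := by
  constructor
  · intro h
    refine ⟨?_, fun a b hab => ?_⟩
    · by_contra hT
      rw [not_nonempty_iff] at hT
      have : heightOf lt ≤ (0 : ℕ) :=
        heightOf_le_iff.2 fun m hm => (eq_zero_of_mem_chainLengths hm).le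
      simp [h] at this
    · have := le_heightOf (two_mem_chainLengths hab)
      simp [h] at this
  · rintro ⟨⟨x⟩, hlt⟩
    refine le_antisymm ?_ ?_
    · exact_mod_cast heightOf_le_iff.2 fun m => le_one_of_mem_chainLengths hlt
    · exact_mod_cast le_heightOf (one_mem_chainLengths lt x)

lemma heightOf_strict_eq_one_iff (le : T → T → Prop) :
    heightOf (fun a b => le a b ∧ ¬ le b a) = 1 ↔ Nonempty T ∧ ∀ a b : T, le a b → le b a := by
  simp only [heightOf_eq_one_iff, not_and_not_right]

end Height

section Semigroup

variable {S : Type u} [Semigroup S]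

lemma HL_eq_one_iff : HL S = 1 ↔ Nonempty S ∧ ∀ a b : S, leL a b → leL b a :=
  heightOf_strict_eq_one_iff leL

lemma HR_eq_one_iff : HR S = 1 ↔ Nonempty S ∧ ∀ a b : S, leR a b → leR b a :=
  heightOf_strict_eq_one_iff leR

lemma HJ_eq_one_iff : HJ S = 1 ↔ Nonempty S ∧ ∀ a b : S, leJ a b → leJ b a :=
  heightOf_strict_eq_one_iff leJ

lemma leJ_of_leL {a b : S} (h : leL a b) : leJ a b :=
  h.imp_right Or.inl

lemma leJ_of_leR {a b : S} (h : leR a b) : leJ a b :=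
  h.imp_right fun h => Or.inr (Or.inl h)

lemma leJ_of_forall_leL_symm (h : ∀ a b : S, leL a b → leL b a) (a b : S) : leJ a b := by
  rcases h (b * a) a (Or.inr ⟨b, rfl⟩) with hab | ⟨v, hab⟩
  · exact Or.inr (Or.inr (Or.inl ⟨a, hab⟩))
  · exact Or.inr (Or.inr (Or.inr ⟨v, a, by rw [mul_assoc]; exact hab⟩))

lemma leJ_of_forall_leR_symm (h : ∀ a b : S, leR a b → leR b a) (a b : S) : leJ a b := by
  rcases h (a * b) a (Or.inr ⟨b, rfl⟩) with hab | ⟨v, hab⟩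
  · exact Or.inr (Or.inl ⟨a, hab⟩)
  · exact Or.inr (Or.inr (Or.inr ⟨a, v, hab⟩))

lemma HL_eq_one_iff_HJ_eq_one_and_leftStable : HL S = 1 ↔ HJ S = 1 ∧ LeftStable S := by
  rw [HL_eq_one_iff, HJ_eq_one_iff]
  constructor
  · rintro ⟨hne, hL⟩
    exact ⟨⟨hne, fun a b _ => leJ_of_forall_leL_symm hL b a⟩, fun a b hab _ => ⟨hab, hL a b hab⟩⟩
  · rintro ⟨⟨hne, hJ⟩, hstab⟩
    exact ⟨hne, fun a b hab => (hstab a b hab ⟨leJ_of_leL hab, hJ a b (leJ_of_leL hab)⟩).2⟩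

lemma HR_eq_one_iff_HJ_eq_one_and_rightStable : HR S = 1 ↔ HJ S = 1 ∧ RightStable S := by
  rw [HR_eq_one_iff, HJ_eq_one_iff]
  constructor
  · rintro ⟨hne, hR⟩
    exact ⟨⟨hne, fun a b _ => leJ_of_forall_leR_symm hR b a⟩, fun a b hab _ => ⟨hab, hR a b hab⟩⟩
  · rintro ⟨⟨hne, hJ⟩, hstab⟩
    exact ⟨hne, fun a b hab => (hstab a b hab ⟨leJ_of_leR hab, hJ a b (leJ_of_leR hab)⟩).2⟩

end Semigroup

/-- `H_L(S) = 1` iff `H_J(S) = 1` and `S` is left stable; dually for `R`. -/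
theorem height_one_characterisation (S : Type u) [Semigroup S] :
    (HL S = 1 ↔ HJ S = 1 ∧ LeftStable S) ∧
    (HR S = 1 ↔ HJ S = 1 ∧ RightStable S) :=
  ⟨HL_eq_one_iff_HJ_eq_one_and_leftStable, HR_eq_one_iff_HJ_eq_one_and_rightStable⟩

end GreenHeights
end

section
/- Let S be a semigroup and ρ a congruence on S, and let K be any one of Green's relations L, R, J. Then: (1) H_K(S) ≥ H_K(S/ρ); (2) if ≤_K ∩ ρ = K ∩ ρ (as binary relations on S, where ≤_K and K are taken in S), then H_K(S) = H_K(S/ρ); (3) if S is left stable and ≤_L ∩ ρ ⊆ J, then H_L(S) = H_L(S/ρ); (4) if S is right stable and ≤_R ∩ ρ ⊆ J, then H_R(S) = H_R(S/ρ). -/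
/-! A surjective homomorphism `f : S → T` preserves `≤_K` for `K ∈ {L, R, J}` and lifts it:
if `q ≤_K f b` then `q = f a` for some `a ≤_K b`, because multipliers in `T¹` lift to `S¹`.
Lifting a chain of `T` from the top down gives a chain of `S` of the same length, strict
because `f` preserves `≤_K`; so `H_K(T) ≤ H_K(S)`. Conversely, the image of a strict chain `b`
of `S` stays strict as soon as `a ≤_K b` and `f a = f b` force `b ≤_K a`: if
`f (b i) ≤_K f (b j)` with `i < j`, lift `f (b i)` to some `a ≤_K b j ≤_K b i`, and then
`b i ≤_K a ≤_K b j`. For the quotient map of `ρ`, hypothesis (2), and left (right) stability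
together with `≤_K ∩ ρ ⊆ J`, each give exactly this condition. -/

namespace GreenHeights

universe u

section Chains

variable {T Q : Type u} {φ : T → Q} {le : T → T → Prop} {le' : Q → Q → Prop}

lemma heightOf_mono_s8 {lt : T → T → Prop} {lt' : Q → Q → Prop}
    (h : chainLengths lt ⊆ chainLengths lt') : heightOf lt ≤ heightOf lt' :=
  biSup_mono h

lemma exists_lift_chain_below
    (hlift : ∀ q b, le' q (φ b) → ∃ a, φ a = q ∧ le a b)
    (htrans : ∀ {x y z}, le x y → le y z → le x z) :
    ∀ {m : ℕ} (cq : Fin m → Q), (∀ i j, i < j → le' (cq j) (cq i)) →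
      ∀ x, (∀ i, le' (cq i) (φ x)) →
      ∃ b : Fin m → T, (∀ i, φ (b i) = cq i ∧ le (b i) x) ∧ ∀ i j, i < j → le (b j) (b i)
  | 0, _, _, _, _ => ⟨Fin.elim0, fun i => i.elim0, fun i => i.elim0⟩
  | m + 1, cq, hcq, x, hx => by
    obtain ⟨a, ha, hax⟩ := hlift _ _ (hx 0)
    obtain ⟨b, hb, hchain⟩ := exists_lift_chain_below hlift htrans (Fin.tail cq)
      (fun i j hij => hcq _ _ (Fin.succ_lt_succ_iff.2 hij)) a
      (fun i => ha ▸ hcq 0 i.succ i.succ_pos)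
    refine ⟨Fin.cons a b, fun i => ?_, fun i j hij => ?_⟩
    · cases i using Fin.cases with
      | zero => exact ⟨ha, hax⟩
      | succ i => exact ⟨(hb i).1, htrans (hb i).2 hax⟩
    · cases j using Fin.cases with
      | zero => exact absurd hij (Fin.not_lt_zero _)
      | succ j =>
        cases i using Fin.cases with
        | zero => exact (hb j).2
        | succ i => exact hchain i j (Fin.succ_lt_succ_iff.1 hij)

lemma heightOf_le_of_lift (hsurj : Function.Surjective φ) (hrefl : ∀ q, le' q q)
    (hmono : ∀ a b, le a b → le' (φ a) (φ b))
    (hlift : ∀ q b, le' q (φ b) → ∃ a, φ a = q ∧ le a b)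
    (htrans : ∀ {x y z}, le x y → le y z → le x z) :
    heightOf (fun x y : Q => le' x y ∧ ¬ le' y x) ≤
      heightOf (fun x y : T => le x y ∧ ¬ le y x) := by
  refine heightOf_mono_s8 ?_
  rintro (_ | m) ⟨cq, hcq⟩
  · exact ⟨Fin.elim0, fun i => i.elim0⟩
  obtain ⟨x, hx⟩ := hsurj (cq 0)
  have hbelow : ∀ i, le' (cq i) (φ x) := fun i => by
    rcases (Fin.zero_le i).eq_or_lt with rfl | hi
    · exact hx ▸ hrefl _
    · exact hx ▸ (hcq 0 i hi).1
  obtain ⟨b, hb, hchain⟩ :=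
    exists_lift_chain_below hlift htrans cq (fun i j hij => (hcq i j hij).1) x hbelow
  refine ⟨b, fun i j hij => ⟨hchain i j hij, fun hji => (hcq i j hij).2 ?_⟩⟩
  simpa only [(hb i).1, (hb j).1] using hmono _ _ hji

lemma heightOf_le_of_fibers (hmono : ∀ a b, le a b → le' (φ a) (φ b))
    (hlift : ∀ q b, le' q (φ b) → ∃ a, φ a = q ∧ le a b)
    (htrans : ∀ {x y z}, le x y → le y z → le x z)
    (hfiber : ∀ a b, le a b → φ a = φ b → le b a) :
    heightOf (fun x y : T => le x y ∧ ¬ le y x) ≤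
      heightOf (fun x y : Q => le' x y ∧ ¬ le' y x) := by
  refine heightOf_mono_s8 ?_
  rintro m ⟨b, hb⟩
  refine ⟨φ ∘ b, fun i j hij => ⟨hmono _ _ (hb i j hij).1, fun hji => (hb i j hij).2 ?_⟩⟩
  obtain ⟨a, ha, hab⟩ := hlift _ _ hji
  exact htrans (hfiber a (b i) (htrans hab (hb i j hij).1) ha) hab

end Chains

section Green

variable {S T : Type u} [Semigroup S] [Semigroup T]

lemma leL_trans_s8 {a b d : S} (h₁ : leL a b) (h₂ : leL b d) : leL a d := by
  rcases h₁ with rfl | ⟨s, rfl⟩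
  · exact h₂
  rcases h₂ with rfl | ⟨t, rfl⟩
  · exact Or.inr ⟨s, rfl⟩
  · exact Or.inr ⟨s * t, (mul_assoc s t d).symm⟩

lemma leR_trans_s8 {a b d : S} (h₁ : leR a b) (h₂ : leR b d) : leR a d := by
  rcases h₁ with rfl | ⟨s, rfl⟩
  · exact h₂
  rcases h₂ with rfl | ⟨t, rfl⟩
  · exact Or.inr ⟨s, rfl⟩
  · exact Or.inr ⟨t * s, mul_assoc d t s⟩

lemma leJ_iff_withOne {a b : S} :
    leJ a b ↔ ∃ s t : WithOne S, (a : WithOne S) = s * b * t := by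
  constructor
  · rintro (rfl | ⟨s, rfl⟩ | ⟨t, rfl⟩ | ⟨s, t, rfl⟩)
    · exact ⟨1, 1, by simp⟩
    · exact ⟨s, 1, by simp⟩
    · exact ⟨1, t, by simp⟩
    · exact ⟨s, t, by simp⟩
  · rintro ⟨s, t, h⟩
    induction s using WithOne.recOneCoe <;> induction t using WithOne.recOneCoe <;>
      simp only [one_mul, mul_one, ← WithOne.coe_mul, WithOne.coe_inj] at h
    · exact Or.inl h
    · exact Or.inr (Or.inr (Or.inl ⟨_, h⟩))
    · exact Or.inr (Or.inl ⟨_, h⟩)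
    · exact Or.inr (Or.inr (Or.inr ⟨_, _, h⟩))

lemma leJ_trans {a b d : S} (h₁ : leJ a b) (h₂ : leJ b d) : leJ a d := by
  rw [leJ_iff_withOne] at h₁ h₂ ⊢
  obtain ⟨s, t, h₁⟩ := h₁
  obtain ⟨u, v, h₂⟩ := h₂
  exact ⟨s * u, v * t, by rw [h₁, h₂]; simp only [mul_assoc]⟩

lemma leL.map (f : S →ₙ* T) {a b : S} : leL a b → leL (f a) (f b) := by
  rintro (rfl | ⟨s, rfl⟩)
  · exact Or.inl rfl
  · exact Or.inr ⟨f s, map_mul f s b⟩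

lemma leR.map (f : S →ₙ* T) {a b : S} : leR a b → leR (f a) (f b) := by
  rintro (rfl | ⟨s, rfl⟩)
  · exact Or.inl rfl
  · exact Or.inr ⟨f s, map_mul f b s⟩

lemma leJ.map (f : S →ₙ* T) {a b : S} : leJ a b → leJ (f a) (f b) := by
  rintro (rfl | ⟨s, rfl⟩ | ⟨t, rfl⟩ | ⟨s, t, rfl⟩)
  · exact Or.inl rfl
  · exact Or.inr (Or.inl ⟨f s, map_mul f s b⟩)
  · exact Or.inr (Or.inr (Or.inl ⟨f t, map_mul f b t⟩))
  · exact Or.inr (Or.inr (Or.inr ⟨f s, f t, by rw [map_mul, map_mul]⟩))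

variable {f : S →ₙ* T}

lemma exists_leL_lift (hf : Function.Surjective f) {q : T} {b : S} :
    leL q (f b) → ∃ a, f a = q ∧ leL a b := by
  rintro (rfl | ⟨s', h⟩)
  · exact ⟨b, rfl, Or.inl rfl⟩
  · obtain ⟨s, rfl⟩ := hf s'
    exact ⟨s * b, by rw [map_mul, h], Or.inr ⟨s, rfl⟩⟩

lemma exists_leR_lift (hf : Function.Surjective f) {q : T} {b : S} :
    leR q (f b) → ∃ a, f a = q ∧ leR a b := by
  rintro (rfl | ⟨s', h⟩)
  · exact ⟨b, rfl, Or.inl rfl⟩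
  · obtain ⟨s, rfl⟩ := hf s'
    exact ⟨b * s, by rw [map_mul, h], Or.inr ⟨s, rfl⟩⟩

lemma exists_leJ_lift (hf : Function.Surjective f) {q : T} {b : S} :
    leJ q (f b) → ∃ a, f a = q ∧ leJ a b := by
  rintro (rfl | ⟨s', h⟩ | ⟨t', h⟩ | ⟨s', t', h⟩)
  · exact ⟨b, rfl, Or.inl rfl⟩
  · obtain ⟨s, rfl⟩ := hf s'
    exact ⟨s * b, by rw [map_mul, h], Or.inr (Or.inl ⟨s, rfl⟩)⟩
  · obtain ⟨t, rfl⟩ := hf t'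
    exact ⟨b * t, by rw [map_mul, h], Or.inr (Or.inr (Or.inl ⟨t, rfl⟩))⟩
  · obtain ⟨s, rfl⟩ := hf s'
    obtain ⟨t, rfl⟩ := hf t'
    exact ⟨s * b * t, by rw [map_mul, map_mul, h], Or.inr (Or.inr (Or.inr ⟨s, t, rfl⟩))⟩

lemma HL_le_of_surjective (hf : Function.Surjective f) : HL T ≤ HL S :=
  heightOf_le_of_lift hf (fun _ => Or.inl rfl) (fun _ _ => leL.map f)
    (fun _ _ => exists_leL_lift hf) leL_trans_s8

lemma HR_le_of_surjective (hf : Function.Surjective f) : HR T ≤ HR S :=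
  heightOf_le_of_lift hf (fun _ => Or.inl rfl) (fun _ _ => leR.map f)
    (fun _ _ => exists_leR_lift hf) leR_trans_s8

lemma HJ_le_of_surjective (hf : Function.Surjective f) : HJ T ≤ HJ S :=
  heightOf_le_of_lift hf (fun _ => Or.inl rfl) (fun _ _ => leJ.map f)
    (fun _ _ => exists_leJ_lift hf) leJ_trans

lemma HL_eq_of_surjective (hf : Function.Surjective f)
    (hfiber : ∀ a b, leL a b → f a = f b → leL b a) : HL S = HL T :=
  le_antisymm
    (heightOf_le_of_fibers (le := leL) (le' := leL) (fun _ _ => leL.map f)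
      (fun _ _ => exists_leL_lift hf) leL_trans_s8 hfiber)
    (HL_le_of_surjective hf)

lemma HR_eq_of_surjective (hf : Function.Surjective f)
    (hfiber : ∀ a b, leR a b → f a = f b → leR b a) : HR S = HR T :=
  le_antisymm
    (heightOf_le_of_fibers (le := leR) (le' := leR) (fun _ _ => leR.map f)
      (fun _ _ => exists_leR_lift hf) leR_trans_s8 hfiber)
    (HR_le_of_surjective hf)

lemma HJ_eq_of_surjective (hf : Function.Surjective f)
    (hfiber : ∀ a b, leJ a b → f a = f b → leJ b a) : HJ S = HJ T :=
  le_antisymm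
    (heightOf_le_of_fibers (le := leJ) (le' := leJ) (fun _ _ => leJ.map f)
      (fun _ _ => exists_leJ_lift hf) leJ_trans hfiber)
    (HJ_le_of_surjective hf)

end Green

/-- Heights of quotients by a congruence `c` (Mathlib's `Con`):
(1) each of the `L`-, `R`-, `J`-heights of `S/c` is at most that of `S`;
(2) if `≤_K ∩ c = K ∩ c` then the `K`-heights agree, for `K ∈ {L, R, J}`;
(3) if `S` is left stable and `≤_L ∩ c ⊆ J` then the `L`-heights agree;
(4) dually for right stability. -/
theorem heights_of_quotients (S : Type u) [Semigroup S] (c : Con S) :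
    (HL c.Quotient ≤ HL S ∧ HR c.Quotient ≤ HR S ∧ HJ c.Quotient ≤ HJ S) ∧
    ((∀ a b : S, (leL a b ∧ c a b) ↔ (eqvL a b ∧ c a b)) → HL S = HL c.Quotient) ∧
    ((∀ a b : S, (leR a b ∧ c a b) ↔ (eqvR a b ∧ c a b)) → HR S = HR c.Quotient) ∧
    ((∀ a b : S, (leJ a b ∧ c a b) ↔ (eqvJ a b ∧ c a b)) → HJ S = HJ c.Quotient) ∧
    (LeftStable S → (∀ a b : S, leL a b → c a b → eqvJ a b) → HL S = HL c.Quotient) ∧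
    (RightStable S → (∀ a b : S, leR a b → c a b → eqvJ a b) → HR S = HR c.Quotient) := by
  have hsurj : Function.Surjective c.mkMulHom := fun q => q.induction_on fun a => ⟨a, rfl⟩
  have hker {a b : S} (h : c.mkMulHom a = c.mkMulHom b) : c a b := c.eq.mp h
  refine ⟨⟨HL_le_of_surjective hsurj, HR_le_of_surjective hsurj, HJ_le_of_surjective hsurj⟩,
    fun h => ?_, fun h => ?_, fun h => ?_, fun hst h => ?_, fun hst h => ?_⟩
  · exact HL_eq_of_surjective hsurj fun a b hab he => ((h a b).mp ⟨hab, hker he⟩).1.2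
  · exact HR_eq_of_surjective hsurj fun a b hab he => ((h a b).mp ⟨hab, hker he⟩).1.2
  · exact HJ_eq_of_surjective hsurj fun a b hab he => ((h a b).mp ⟨hab, hker he⟩).1.2
  · exact HL_eq_of_surjective hsurj fun a b hab he => (hst a b hab (h a b hab (hker he))).2
  · exact HR_eq_of_surjective hsurj fun a b hab he => (hst a b hab (h a b hab (hker he))).2

end GreenHeights
end

section
/- For every n ∈ ℕ with n ≥ 1 and every m with n ≤ m ≤ 2^n − 1, there exists a finite semigroup S with exactly m elements such that H_L(S) = n and H_R(S) = H_J(S) = m (so in particular S is J-trivial, i.e. Green's relation J on S is equality). -/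
namespace GreenHeights

universe u

/-! Build semigroups `S_j = {1, …, q j}` level by level. Writing `M_j = {0, …, q j}` for `S_j`
with `0` as its adjoined identity, `M_{j+1}` is `M_j` together with a copy of the top `shift j`
elements of `M_j`, moved up by `shift j`: elements of `M_j` act as left identities on the copy, the
copy is multiplied on the right through `M_j`, and two copied elements multiply to the zero
`q (j + 1)`. A product is never smaller than its factors, so `S_j` is `J`-trivial, and every larger
number is a right multiple of a smaller one, so its `R`- and `J`-height is `q j`. Along `>_L` the
number of shifts (`lrank`) strictly increases and lies in `{1, …, j}`, while `q 1 >_L ⋯ >_L q j`,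
so the `L`-height is `j`. The sizes `q i = min (2 ^ i - 1) (m - n + i)` obey
`q (i + 1) ≤ 2 q i + 1` and reach `m` at `i = n`. -/

section Heights

variable {T : Type u} {lt : T → T → Prop}

lemma le_of_mem_chainLengths_of_rank (f : T → ℕ) (hf : ∀ a b, lt a b → f b < f a) {k : ℕ}
    (hk : ∀ a, f a ∈ Finset.Icc 1 k) {l : ℕ} (hl : l ∈ chainLengths lt) : l ≤ k := by
  obtain ⟨c, hc⟩ := hl
  have hmono : StrictMono (f ∘ c) := fun i j hij => hf _ _ (hc i j hij)
  simpa using Finset.card_le_card_of_injOn (s := Finset.univ) (f ∘ c) (fun i _ => hk (c i))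
    hmono.injective.injOn

lemma heightOf_eq_of_rank (f : T → ℕ) (hf : ∀ a b, lt a b → f b < f a) {k : ℕ}
    (hk : ∀ a, f a ∈ Finset.Icc 1 k) (hchain : k ∈ chainLengths lt) :
    heightOf lt = k :=
  le_antisymm (iSup₂_le fun _ hl => by exact_mod_cast le_of_mem_chainLengths_of_rank f hf hk hl)
    (le_iSup₂_of_le k hchain le_rfl)

end Heights

section Green

variable {S : Type u} [Semigroup S] {a b : S}

lemma leL.leJ (h : leL a b) : leJ a b := by
  rcases h with h | h
  · exact Or.inl h
  · exact Or.inr (Or.inl h)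

lemma leR.leJ (h : leR a b) : leJ a b := by
  rcases h with h | h
  · exact Or.inl h
  · exact Or.inr (Or.inr (Or.inl h))

end Green

structure LevelSizes where
  q : ℕ → ℕ
  q_zero : q 0 = 0
  q_lt_succ : ∀ i, q i < q (i + 1)
  q_succ_le : ∀ i, q (i + 1) ≤ 2 * q i + 1

namespace LevelSizes

variable (Q : LevelSizes)

def shift (j : ℕ) : ℕ := Q.q (j + 1) - Q.q j

-- An element `x > q j` of `M_{j+1}` is the copy of `x - shift j ∈ M_j`; by `q_succ_le`,
-- `shift j ≤ q j + 1 ≤ x`, so this subtraction never truncates.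
def mul : ℕ → ℕ → ℕ → ℕ
  | 0, _, _ => 0
  | j + 1, x, y =>
    if x ≤ Q.q j then
      if y ≤ Q.q j then mul j x y else y
    else
      if y ≤ Q.q j then mul j (x - Q.shift j) y + Q.shift j else Q.q (j + 1)

def lrank : ℕ → ℕ → ℕ
  | 0, _ => 0
  | j + 1, x => if x ≤ Q.q j then lrank j x else lrank j (x - Q.shift j) + 1

variable {Q} {i j s w x y z : ℕ}

lemma q_add_shift (j : ℕ) : Q.q j + Q.shift j = Q.q (j + 1) := by
  have := Q.q_lt_succ j; unfold shift; omega

lemma shift_le (j : ℕ) : Q.shift j ≤ Q.q j + 1 := by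
  have := Q.q_succ_le j; unfold shift; omega

lemma q_strictMono : StrictMono Q.q := strictMono_nat_of_lt_succ Q.q_lt_succ

lemma mul_lower_lower (hx : x ≤ Q.q j) (hy : y ≤ Q.q j) : Q.mul (j + 1) x y = Q.mul j x y := by
  simp only [mul, if_pos hx, if_pos hy]

lemma mul_lower_upper (hx : x ≤ Q.q j) (hy : Q.q j < y) : Q.mul (j + 1) x y = y := by
  simp only [mul, if_pos hx, if_neg hy.not_ge]

lemma mul_upper_lower (hx : Q.q j < x) (hy : y ≤ Q.q j) :
    Q.mul (j + 1) x y = Q.mul j (x - Q.shift j) y + Q.shift j := by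
  simp only [mul, if_neg hx.not_ge, if_pos hy]

lemma mul_upper_upper (hx : Q.q j < x) (hy : Q.q j < y) : Q.mul (j + 1) x y = Q.q (j + 1) := by
  simp only [mul, if_neg hx.not_ge, if_neg hy.not_ge]

lemma lrank_lower (hx : x ≤ Q.q j) : Q.lrank (j + 1) x = Q.lrank j x := by
  simp only [lrank, if_pos hx]

lemma lrank_upper (hx : Q.q j < x) : Q.lrank (j + 1) x = Q.lrank j (x - Q.shift j) + 1 := by
  simp only [lrank, if_neg hx.not_ge]

theorem max_le_mul_le (hx : x ≤ Q.q j) (hy : y ≤ Q.q j) :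
    max x y ≤ Q.mul j x y ∧ Q.mul j x y ≤ Q.q j := by
  induction j generalizing x y with
  | zero => have := Q.q_zero; simp only [mul]; omega
  | succ j ih =>
    have hsum := Q.q_add_shift j
    have hshift := Q.shift_le j
    rcases le_or_gt x (Q.q j) with hxl | hxu <;> rcases le_or_gt y (Q.q j) with hyl | hyu
    · rw [mul_lower_lower hxl hyl]; have := ih hxl hyl; omega
    · rw [mul_lower_upper hxl hyu]; omega
    · rw [mul_upper_lower hxu hyl]; have := ih (x := x - Q.shift j) (by omega) hyl; omega
    · rw [mul_upper_upper hxu hyu]; omega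

lemma le_mul_left (hx : x ≤ Q.q j) (hy : y ≤ Q.q j) : x ≤ Q.mul j x y :=
  (le_max_left x y).trans (max_le_mul_le hx hy).1

lemma le_mul_right (hx : x ≤ Q.q j) (hy : y ≤ Q.q j) : y ≤ Q.mul j x y :=
  (le_max_right x y).trans (max_le_mul_le hx hy).1

lemma mul_le (hx : x ≤ Q.q j) (hy : y ≤ Q.q j) : Q.mul j x y ≤ Q.q j :=
  (max_le_mul_le hx hy).2

lemma q_mul (hy : y ≤ Q.q j) : Q.mul j (Q.q j) y = Q.q j :=
  le_antisymm (mul_le le_rfl hy) (le_mul_left le_rfl hy)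

lemma q_lt_mul_upper_lower (hx : Q.q j < x) (hx' : x ≤ Q.q (j + 1)) (hy : y ≤ Q.q j) :
    Q.q j < Q.mul (j + 1) x y := by
  rw [mul_upper_lower hx hy]
  have := Q.q_add_shift j
  have := le_mul_left (x := x - Q.shift j) (by omega) hy
  omega

theorem mul_assoc (hx : x ≤ Q.q j) (hy : y ≤ Q.q j) (hz : z ≤ Q.q j) :
    Q.mul j (Q.mul j x y) z = Q.mul j x (Q.mul j y z) := by
  induction j generalizing x y z with
  | zero => simp only [mul]
  | succ j ih =>
    have hsum := Q.q_add_shift j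
    have hshift := Q.shift_le j
    have hqq : Q.q j < Q.q (j + 1) := Q.q_lt_succ j
    rcases le_or_gt x (Q.q j) with hxl | hxu <;> rcases le_or_gt y (Q.q j) with hyl | hyu <;>
      rcases le_or_gt z (Q.q j) with hzl | hzu
    · rw [mul_lower_lower hxl hyl, mul_lower_lower (mul_le hxl hyl) hzl, mul_lower_lower hyl hzl,
        mul_lower_lower hxl (mul_le hyl hzl), ih hxl hyl hzl]
    · rw [mul_lower_lower hxl hyl, mul_lower_upper (mul_le hxl hyl) hzu, mul_lower_upper hyl hzu,
        mul_lower_upper hxl hzu]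
    · rw [mul_lower_upper hxl hyu, mul_lower_upper hxl (q_lt_mul_upper_lower hyu hy hzl)]
    · rw [mul_lower_upper hxl hyu, mul_upper_upper hyu hzu, mul_lower_upper hxl hqq]
    · have hx' : x - Q.shift j ≤ Q.q j := by omega
      have := le_mul_left hx' hyl
      rw [mul_upper_lower hxu hyl, mul_lower_lower hyl hzl, mul_upper_lower hxu (mul_le hyl hzl),
        mul_upper_lower (by omega) hzl, Nat.add_sub_cancel, ih hx' hyl hzl]
    · rw [mul_upper_upper (q_lt_mul_upper_lower hxu hx hyl) hzu, mul_lower_upper hyl hzu,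
        mul_upper_upper hxu hzu]
    -- `q (j + 1)` is a left zero because it shifts down to `q j`, the zero of level `j`.
    · rw [mul_upper_upper hxu hyu, mul_upper_upper hxu (q_lt_mul_upper_lower hyu hy hzl),
        mul_upper_lower hqq hzl, show Q.q (j + 1) - Q.shift j = Q.q j by omega, q_mul hzl, hsum]
    · rw [mul_upper_upper hxu hyu, mul_upper_upper hqq hzu, mul_upper_upper hyu hzu,
        mul_upper_upper hxu hqq]

theorem exists_mul_eq (hxw : x < w) (hw : w ≤ Q.q j) :
    ∃ s, 1 ≤ s ∧ s ≤ Q.q j ∧ Q.mul j x s = w := by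
  induction j generalizing x w with
  | zero => have := Q.q_zero; omega
  | succ j ih =>
    have hsum := Q.q_add_shift j
    have hshift := Q.shift_le j
    rcases le_or_gt x (Q.q j) with hxl | hxu
    · rcases le_or_gt w (Q.q j) with hwl | hwu
      · obtain ⟨s, hs1, hsq, hs⟩ := ih hxw hwl
        exact ⟨s, hs1, by omega, by rw [mul_lower_lower hxl hsq, hs]⟩
      · exact ⟨w, by omega, hw, mul_lower_upper hxl hwu⟩
    · obtain ⟨s, hs1, hsq, hs⟩ :=
        ih (x := x - Q.shift j) (w := w - Q.shift j) (by omega) (by omega)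
      exact ⟨s, hs1, by omega, by rw [mul_upper_lower hxu hsq, hs]; omega⟩

theorem mul_of_le (hij : i ≤ j) (hx : x ≤ Q.q i) (hy : y ≤ Q.q i) :
    Q.mul j x y = Q.mul i x y := by
  induction j, hij using Nat.le_induction with
  | base => rfl
  | succ j hij ih =>
    have := Q.q_strictMono.monotone hij
    rw [mul_lower_lower (hx.trans this) (hy.trans this), ih]

lemma lrank_le (j x : ℕ) : Q.lrank j x ≤ j := by
  induction j generalizing x with
  | zero => simp only [lrank, le_refl]
  | succ j ih =>
    unfold lrank
    split_ifs
    · exact (ih x).trans j.le_succ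
    · exact Nat.succ_le_succ (ih _)

lemma one_le_lrank (hx1 : 1 ≤ x) (hx : x ≤ Q.q j) : 1 ≤ Q.lrank j x := by
  induction j with
  | zero => have := Q.q_zero; omega
  | succ j ih =>
    rcases le_or_gt x (Q.q j) with hxl | hxu
    · rw [lrank_lower hxl]; exact ih hxl
    · rw [lrank_upper hxu]; omega

theorem lrank_lt_lrank_mul (hs : s ≤ Q.q j) (hx : x ≤ Q.q j) (hne : Q.mul j s x ≠ x) :
    Q.lrank j x < Q.lrank j (Q.mul j s x) := by
  induction j generalizing s x with
  | zero => have := Q.q_zero; simp only [mul] at hne; omega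
  | succ j ih =>
    have hsum := Q.q_add_shift j
    have hshift := Q.shift_le j
    rcases le_or_gt s (Q.q j) with hsl | hsu <;> rcases le_or_gt x (Q.q j) with hxl | hxu
    · rw [mul_lower_lower hsl hxl] at hne ⊢
      rw [lrank_lower hxl, lrank_lower (mul_le hsl hxl)]
      exact ih hsl hxl hne
    · exact absurd (mul_lower_upper hsl hxu) hne
    · have hs' : s - Q.shift j ≤ Q.q j := by omega
      have := le_mul_left hs' hxl
      rw [lrank_lower hxl, mul_upper_lower hsu hxl, lrank_upper (by omega), Nat.add_sub_cancel,
        Nat.lt_succ_iff]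
      rcases eq_or_ne (Q.mul j (s - Q.shift j) x) x with heq | hne'
      · rw [heq]
      · exact (ih hs' hxl hne').le
    -- Left multiplication by `q j`, the zero of level `j`, raises the rank of `x - shift j`.
    · rw [mul_upper_upper hsu hxu] at hne ⊢
      have hx' : x - Q.shift j < Q.q j := by omega
      have := ih le_rfl hx'.le (by rw [q_mul hx'.le]; omega)
      rw [q_mul hx'.le] at this
      rw [lrank_upper hxu, lrank_upper (Q.q_lt_succ j),
        show Q.q (j + 1) - Q.shift j = Q.q j by omega]
      omega

variable (Q) in
def Level (j : ℕ) : Type := {x : ℕ // x ∈ Finset.Icc 1 (Q.q j)}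

namespace Level

instance : Fintype (Q.Level j) := inferInstanceAs (Fintype {x // x ∈ Finset.Icc 1 (Q.q j)})

lemma card : Fintype.card (Q.Level j) = Q.q j := by
  rw [show Fintype.card (Q.Level j) = (Finset.Icc 1 (Q.q j)).card from Fintype.card_coe _,
    Nat.card_Icc, Nat.add_sub_cancel]

lemma one_le (a : Q.Level j) : 1 ≤ a.1 := (Finset.mem_Icc.1 a.2).1

lemma le_q (a : Q.Level j) : a.1 ≤ Q.q j := (Finset.mem_Icc.1 a.2).2

instance : Semigroup (Q.Level j) where
  mul a b := ⟨Q.mul j a.1 b.1, Finset.mem_Icc.2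
    ⟨a.one_le.trans (le_mul_left a.le_q b.le_q), mul_le a.le_q b.le_q⟩⟩
  mul_assoc a b c := Subtype.ext (LevelSizes.mul_assoc a.le_q b.le_q c.le_q)

variable {a b : Q.Level j}

lemma le_of_leJ (h : leJ a b) : b.1 ≤ a.1 := by
  rcases h with rfl | ⟨s, rfl⟩ | ⟨t, rfl⟩ | ⟨s, t, rfl⟩
  · exact le_rfl
  · exact le_mul_right s.le_q b.le_q
  · exact le_mul_left b.le_q t.le_q
  · exact (le_mul_right s.le_q b.le_q).trans (le_mul_left (s * b).le_q t.le_q)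

lemma eq_of_eqvJ (h : eqvJ a b) : a = b :=
  Subtype.ext (le_antisymm (le_of_leJ h.2) (le_of_leJ h.1))

lemma leR_iff : leR a b ↔ b.1 ≤ a.1 := by
  refine ⟨fun h => le_of_leJ h.leJ, fun h => ?_⟩
  rcases h.eq_or_lt with h | h
  · exact Or.inl (Subtype.ext h.symm)
  · obtain ⟨s, hs1, hsq, hs⟩ := exists_mul_eq h a.le_q
    exact Or.inr ⟨⟨s, Finset.mem_Icc.2 ⟨hs1, hsq⟩⟩, Subtype.ext hs.symm⟩

lemma ltR_iff : ltR a b ↔ b.1 < a.1 := by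
  rw [ltR, leR_iff, leR_iff, not_le]
  exact and_iff_right_of_imp le_of_lt

lemma ltJ_iff : ltJ a b ↔ b.1 < a.1 := by
  refine ⟨fun h => (le_of_leJ h.1).lt_of_ne fun heq => h.2 (Or.inl (Subtype.ext heq)),
    fun h => ⟨(leR_iff.2 h.le).leJ, fun h' => (le_of_leJ h').not_gt h⟩⟩

lemma lrank_lt_of_ltL (h : ltL a b) : Q.lrank j b.1 < Q.lrank j a.1 := by
  obtain ⟨rfl | ⟨s, rfl⟩, hba⟩ := h
  · exact absurd (Or.inl rfl) hba
  · exact lrank_lt_lrank_mul s.le_q b.le_q fun heq => hba (Or.inl (Subtype.ext heq.symm))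

lemma ltL_of_mul_eq (h : Q.mul j a.1 b.1 = a.1) (hlt : b.1 < a.1) : ltL a b :=
  ⟨Or.inr ⟨a, Subtype.ext h.symm⟩, fun h' => (le_of_leJ h'.leJ).not_gt hlt⟩

end Level

theorem heightOf_level_of_iff {lt : Q.Level j → Q.Level j → Prop}
    (hlt : ∀ a b, lt a b ↔ b.1 < a.1) : heightOf lt = Q.q j := by
  refine heightOf_eq_of_rank Subtype.val (fun a b h => (hlt a b).1 h) (fun a => a.2) ?_
  refine ⟨fun i => ⟨i + 1, Finset.mem_Icc.2 ⟨by omega, i.2⟩⟩, fun i i' h => (hlt _ _).2 ?_⟩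
  simpa using h

theorem HR_level : HR (Q.Level j) = Q.q j := heightOf_level_of_iff fun _ _ => Level.ltR_iff

theorem HJ_level : HJ (Q.Level j) = Q.q j := heightOf_level_of_iff fun _ _ => Level.ltJ_iff

variable (Q) in
theorem HL_level (j : ℕ) : HL (Q.Level j) = j := by
  have hq1 (i : ℕ) : 1 ≤ Q.q (i + 1) := by have := Q.q_lt_succ i; omega
  have hqj {i : ℕ} (hi : i ≤ j) : Q.q i ≤ Q.q j := Q.q_strictMono.monotone hi
  refine heightOf_eq_of_rank (fun a => Q.lrank j a.1) (fun _ _ => Level.lrank_lt_of_ltL)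
    (fun a => Finset.mem_Icc.2 ⟨one_le_lrank a.one_le a.le_q, lrank_le j a.1⟩) ?_
  -- the chain `q 1 >_L q 2 >_L ⋯ >_L q j`: each `q i` is the zero of level `i`
  refine ⟨fun i => ⟨Q.q (i + 1), Finset.mem_Icc.2 ⟨hq1 i, hqj i.2⟩⟩, fun i i' h => ?_⟩
  have hqq : Q.q (i + 1) ≤ Q.q (i' + 1) := Q.q_strictMono.monotone (by simpa using h.le)
  refine Level.ltL_of_mul_eq ?_ (Q.q_strictMono (by simpa using h))
  change Q.mul j (Q.q (i' + 1)) (Q.q (i + 1)) = Q.q (i' + 1)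
  rw [mul_of_le (Nat.succ_le_of_lt i'.2) le_rfl hqq, q_mul hqq]

def standard (c : ℕ) : LevelSizes where
  q i := min (2 ^ i - 1) (c + i)
  q_zero := by simp
  q_lt_succ i := by have := Nat.one_le_two_pow (n := i); rw [pow_succ]; omega
  q_succ_le i := by rw [pow_succ]; omega

end LevelSizes

theorem exists_semigroup_with_heights_general (n m : ℕ) (hnm : n ≤ m)
    (hm : m ≤ 2 ^ n - 1) :
    ∃ (S : Type) (_ : Semigroup S) (_ : Fintype S),
      Fintype.card S = m ∧ HL S = (n : ℕ∞) ∧ HR S = (m : ℕ∞) ∧ HJ S = (m : ℕ∞) ∧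
      ∀ a b : S, eqvJ a b → a = b := by
  let Q := LevelSizes.standard (m - n)
  have hq : Q.q n = m := show min (2 ^ n - 1) (m - n + n) = m by omega
  refine ⟨Q.Level n, inferInstance, inferInstance, ?_, Q.HL_level n, ?_, ?_,
    fun _ _ => LevelSizes.Level.eq_of_eqvJ⟩
  · rw [LevelSizes.Level.card, hq]
  · rw [LevelSizes.HR_level, hq]
  · rw [LevelSizes.HJ_level, hq]

/-- For every `n ≥ 1` and every `m` with `n ≤ m ≤ 2ⁿ - 1` there is a
finite semigroup `S` of cardinality `m` with `H_L(S) = n` and `H_R(S) = H_J(S) = m`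
(so in particular `S` is `J`-trivial). -/
theorem exists_semigroup_with_heights (n m : ℕ) (hn : 1 ≤ n) (hnm : n ≤ m)
    (hm : m ≤ 2 ^ n - 1) :
    ∃ (S : Type) (_ : Semigroup S) (_ : Fintype S),
      Fintype.card S = m ∧ HL S = (n : ℕ∞) ∧ HR S = (m : ℕ∞) ∧ HJ S = (m : ℕ∞) ∧
      ∀ a b : S, eqvJ a b → a = b :=
  exists_semigroup_with_heights_general n m hnm hm

end GreenHeights
end

section
/- If S is a regular semigroup, then H_L(S) = H_R(S) = H_H(S) = H_E(S) and H_E(S) ≥ H_J(S) (equalities and inequality in ℕ ∪ {∞}). -/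
namespace GreenHeights

universe u

/-- The strict order on the poset of idempotents: `a < b` iff `a` and `b` are idempotents
with `b * a = a`, `a * b = a` (i.e. `a ≤ b`) and `a ≠ b`. -/
def ltE {S : Type u} [Semigroup S] (a b : S) : Prop :=
  a * a = a ∧ b * b = b ∧ b * a = a ∧ a * b = a ∧ a ≠ b

/-- The `E`-height of a semigroup: the height of its poset of idempotents. -/
noncomputable def HE (S : Type u) [Semigroup S] : ℕ∞ := heightOf (ltE (S := S))

/-- A semigroup is regular if every element `a` has an inverse `b`: `a = aba`, `b = bab`. -/
def Regular (S : Type u) [Semigroup S] : Prop :=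
  ∀ a : S, ∃ b : S, a = a * b * a ∧ b = b * a * b

section Aux
variable {S : Type u} [Semigroup S]

lemma leJ_mul_left {a b : S} (s : S) (h : leJ a b) : leJ (s * a) b := by
  rcases h with rfl | ⟨u, rfl⟩ | ⟨v, rfl⟩ | ⟨u, v, rfl⟩
  · exact Or.inr (Or.inl ⟨s, rfl⟩)
  · exact Or.inr (Or.inl ⟨s * u, (mul_assoc ..).symm⟩)
  · exact Or.inr (Or.inr (Or.inr ⟨s, v, (mul_assoc ..).symm⟩))
  · exact Or.inr (Or.inr (Or.inr ⟨s * u, v, by rw [← mul_assoc, ← mul_assoc]⟩))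

lemma leJ_mul_right {a b : S} (t : S) (h : leJ a b) : leJ (a * t) b := by
  rcases h with rfl | ⟨u, rfl⟩ | ⟨v, rfl⟩ | ⟨u, v, rfl⟩
  · exact Or.inr (Or.inr (Or.inl ⟨t, rfl⟩))
  · exact Or.inr (Or.inr (Or.inr ⟨u, t, rfl⟩))
  · exact Or.inr (Or.inr (Or.inl ⟨v * t, mul_assoc ..⟩))
  · exact Or.inr (Or.inr (Or.inr ⟨u, v * t, mul_assoc ..⟩))

lemma leJ_trans_s18 {a b c : S} (h1 : leJ a b) (h2 : leJ b c) : leJ a c := by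
  rcases h1 with rfl | ⟨s, rfl⟩ | ⟨t, rfl⟩ | ⟨s, t, rfl⟩
  · exact h2
  · exact leJ_mul_left s h2
  · exact leJ_mul_right t h2
  · exact leJ_mul_right t (leJ_mul_left s h2)


lemma ltE_imp_ltL {a b : S} (h : ltE a b) : ltL a b := by
  obtain ⟨ha, hb, hba, hab, hne⟩ := h
  refine ⟨Or.inr ⟨a, hab.symm⟩, ?_⟩
  rintro (rfl | ⟨s, hs⟩)
  · exact hne rfl
  · have h2 : b * a = b := by rw [hs, mul_assoc, ha]
    exact hne (hba.symm.trans h2)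

lemma ltE_imp_ltR {a b : S} (h : ltE a b) : ltR a b := by
  obtain ⟨ha, hb, hba, hab, hne⟩ := h
  refine ⟨Or.inr ⟨a, hba.symm⟩, ?_⟩
  rintro (rfl | ⟨s, hs⟩)
  · exact hne rfl
  · have h2 : a * b = b := by rw [hs, ← mul_assoc, ha]
    exact hne (hab.symm.trans h2)

lemma ltE_imp_ltH {a b : S} (h : ltE a b) : ltH a b :=
  ⟨⟨(ltE_imp_ltL h).1, (ltE_imp_ltR h).1⟩, fun hH => (ltE_imp_ltL h).2 hH.1⟩

lemma hmkL (hreg : Regular S) : ∀ a : S, ∃ e : S, e * e = e ∧ leL e a ∧ leL a e := by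
  intro a
  obtain ⟨b, h1, -⟩ := hreg a
  refine ⟨b * a, ?_, Or.inr ⟨b, rfl⟩, Or.inr ⟨a, ?_⟩⟩
  · rw [mul_assoc b a (b * a), ← mul_assoc a b a, ← h1]
  · rw [← mul_assoc, ← h1]

lemma hmkR (hreg : Regular S) : ∀ a : S, ∃ e : S, e * e = e ∧ leR e a ∧ leR a e := by
  intro a
  obtain ⟨b, h1, -⟩ := hreg a
  refine ⟨a * b, ?_, Or.inr ⟨b, rfl⟩, Or.inr ⟨a, h1⟩⟩
  rw [← mul_assoc, ← h1]

lemma hmkJ (hreg : Regular S) : ∀ a : S, ∃ e : S, e * e = e ∧ leJ e a ∧ leJ a e := by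
  intro a
  obtain ⟨e, he, h1, h2⟩ := hmkL hreg a
  exact ⟨e, he, leJ_of_leL h1, leJ_of_leL h2⟩

lemma hstepL (F e : S) (hF : F * F = F) (he : e * e = e) (hle : leL e F) :
    ∃ g : S, g * g = g ∧ F * g = g ∧ g * F = g ∧ leL g e ∧ leL e g := by
  have heF : e * F = e := by
    rcases hle with rfl | ⟨s, rfl⟩
    · exact hF
    · rw [mul_assoc, hF]
  refine ⟨F * e, ?_, ?_, ?_, Or.inr ⟨F, rfl⟩, Or.inr ⟨e, ?_⟩⟩
  · rw [mul_assoc, ← mul_assoc e F e, heF, he]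
  · rw [← mul_assoc, hF]
  · rw [mul_assoc, heF]
  · rw [← mul_assoc, heF, he]

lemma hstepR (F e : S) (hF : F * F = F) (he : e * e = e) (hle : leR e F) :
    ∃ g : S, g * g = g ∧ F * g = g ∧ g * F = g ∧ leR g e ∧ leR e g := by
  have hFe : F * e = e := by
    rcases hle with rfl | ⟨s, rfl⟩
    · exact hF
    · rw [← mul_assoc, hF]
  refine ⟨e * F, ?_, ?_, ?_, Or.inr ⟨F, rfl⟩, Or.inr ⟨e, ?_⟩⟩
  · rw [mul_assoc, ← mul_assoc F e F, hFe, ← mul_assoc, he]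
  · rw [← mul_assoc, hFe]
  · rw [mul_assoc, hF]
  · rw [mul_assoc, hFe, he]

lemma hstepJ (F e : S) (hF : F * F = F) (he : e * e = e) (hle : leJ e F) :
    ∃ g : S, g * g = g ∧ F * g = g ∧ g * F = g ∧ leJ g e ∧ leJ e g := by
  rcases hle with heq | ⟨s, heq⟩ | ⟨t, heq⟩ | ⟨s, t, heq⟩
  · refine ⟨e, he, ?_, ?_, Or.inl rfl, Or.inl rfl⟩
    · rw [heq]; exact hF
    · rw [heq]; exact hF
  · -- e = s * F
    have heF : e * F = e := by rw [heq, mul_assoc, hF]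
    refine ⟨F * e, ?_, ?_, ?_, Or.inr (Or.inl ⟨F, rfl⟩), Or.inr (Or.inl ⟨e, ?_⟩)⟩
    · rw [mul_assoc, ← mul_assoc e F e, heF, he]
    · rw [← mul_assoc, hF]
    · rw [mul_assoc, heF]
    · rw [← mul_assoc, heF, he]
  · -- e = F * t
    have hFe : F * e = e := by rw [heq, ← mul_assoc, hF]
    refine ⟨e * F, ?_, ?_, ?_, Or.inr (Or.inr (Or.inl ⟨F, rfl⟩)),
      Or.inr (Or.inr (Or.inl ⟨e, ?_⟩))⟩
    · rw [mul_assoc, ← mul_assoc F e F, hFe, ← mul_assoc, he]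
    · rw [← mul_assoc, hFe]
    · rw [mul_assoc, hF]
    · rw [mul_assoc, hFe, he]
  · -- e = s * F * t
    set p : S := F * t with hp
    set q : S := s * F with hq
    -- heq : e = q * t  (since s * F * t = (s*F)*t = q * t)
    have hqt : q * t = e := heq.symm
    have hsp : s * p = e := by rw [hp, ← mul_assoc]; exact heq.symm
    have hqp : q * p = e := by
      rw [hq, hp, mul_assoc s F (F * t), ← mul_assoc F F t, hF, ← mul_assoc]
      exact heq.symm
    have hFp : F * p = p := by rw [hp, ← mul_assoc, hF]
    have hqF : q * F = q := by rw [hq, mul_assoc, hF]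
    refine ⟨p * (e * q), ?_, ?_, ?_, ?_, ?_⟩
    · rw [mul_assoc p (e * q) (p * (e * q)), mul_assoc e q (p * (e * q)),
        ← mul_assoc q p (e * q), hqp, ← mul_assoc e e q, he, ← mul_assoc e e q, he]
    · rw [← mul_assoc F p (e * q), hFp]
    · rw [mul_assoc p (e * q) F, mul_assoc e q F, hqF]
    · exact Or.inr (Or.inr (Or.inr ⟨p, q, (mul_assoc p e q).symm⟩))
    · refine Or.inr (Or.inr (Or.inr ⟨s, t, ?_⟩))
      rw [← mul_assoc s p (e * q), hsp, ← mul_assoc e e q, he, mul_assoc e q t, hqt, he]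



lemma chain_to_E (P : S → S → Prop)
    (hPt : ∀ a b c : S, P a b → P b c → P a c)
    (hmk : ∀ a : S, ∃ e : S, e * e = e ∧ P e a ∧ P a e)
    (hstep : ∀ F e : S, F * F = F → e * e = e → P e F →
      ∃ g : S, g * g = g ∧ F * g = g ∧ g * F = g ∧ P g e ∧ P e g)
    (m : ℕ)
    (hm : ∃ c : Fin m → S, ∀ i j : Fin m, i < j → P (c j) (c i) ∧ ¬ P (c i) (c j)) :
    m ∈ chainLengths (ltE (S := S)) := by
  classical
  rcases Nat.eq_zero_or_pos m with rfl | hm0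
  · exact ⟨Fin.elim0, fun i => i.elim0⟩
  obtain ⟨c, hc⟩ := hm
  set c' : ℕ → S := fun k => c ⟨k % m, Nat.mod_lt k hm0⟩ with hc'def
  have hceq : ∀ k, ∀ hk : k < m, c' k = c ⟨k, hk⟩ := by
    intro k hk
    simp only [hc'def]
    congr 1
    exact Fin.ext (Nat.mod_eq_of_lt hk)
  have hc' : ∀ k l : ℕ, k < l → l < m → P (c' l) (c' k) ∧ ¬ P (c' k) (c' l) := by
    intro k l hkl hl
    rw [hceq k (lt_trans hkl hl), hceq l hl]
    exact hc _ _ (Fin.mk_lt_mk.mpr hkl)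
  obtain ⟨F, hF0, hFs⟩ :
      ∃ F : ℕ → S, (F 0 = Classical.choose (hmk (c' 0))) ∧
        ∀ k, F (k + 1) = if h : ∃ g : S, g * g = g ∧ F k * g = g ∧ g * F k = g ∧
            P g (c' (k + 1)) ∧ P (c' (k + 1)) g then Classical.choose h else F k :=
    ⟨fun k => Nat.rec (Classical.choose (hmk (c' 0)))
      (fun k Fk => if h : ∃ g : S, g * g = g ∧ Fk * g = g ∧ g * Fk = g ∧
          P g (c' (k + 1)) ∧ P (c' (k + 1)) g then Classical.choose h else Fk) k,
      rfl, fun k => rfl⟩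
  have step : ∀ k, k + 1 < m → (F k * F k = F k ∧ P (F k) (c' k) ∧ P (c' k) (F k)) →
      ((F (k+1) * F (k+1) = F (k+1) ∧ P (F (k+1)) (c' (k+1)) ∧ P (c' (k+1)) (F (k+1))) ∧
        F k * F (k+1) = F (k+1) ∧ F (k+1) * F k = F (k+1)) := by
    intro k hk1 h
    obtain ⟨hFi, hFc, hcF⟩ := h
    obtain ⟨e, he, hec, hce⟩ := hmk (c' (k + 1))
    have hPeF : P e (F k) :=
      hPt _ _ _ hec (hPt _ _ _ (hc' k (k+1) (Nat.lt_succ_self k) hk1).1 hcF)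
    obtain ⟨g, hg, hFg, hgF, hge, heg⟩ := hstep (F k) e hFi he hPeF
    have hex : ∃ g : S, g * g = g ∧ F k * g = g ∧ g * F k = g ∧
        P g (c' (k + 1)) ∧ P (c' (k + 1)) g :=
      ⟨g, hg, hFg, hgF, hPt _ _ _ hge hec, hPt _ _ _ hce heg⟩
    have hFk1 : F (k + 1) = Classical.choose hex := by rw [hFs k]; exact dif_pos hex
    obtain ⟨hg', hFg', hgF', hgc', hcg'⟩ := Classical.choose_spec hex
    rw [hFk1]
    exact ⟨⟨hg', hgc', hcg'⟩, hFg', hgF'⟩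
  have hInv : ∀ k, k < m → F k * F k = F k ∧ P (F k) (c' k) ∧ P (c' k) (F k) := by
    intro k
    induction k with
    | zero =>
      intro _
      obtain ⟨h1, h2, h3⟩ := Classical.choose_spec (hmk (c' 0))
      rw [hF0]; exact ⟨h1, h2, h3⟩
    | succ k ih =>
      intro hk
      exact (step k hk (ih (by omega))).1
  have hAdj : ∀ k, k + 1 < m → F k * F (k+1) = F (k+1) ∧ F (k+1) * F k = F (k+1) :=
    fun k hk => (step k hk (hInv k (by omega))).2
  have hPair : ∀ j i : ℕ, i < j → j < m → F i * F j = F j ∧ F j * F i = F j := by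
    intro j
    induction j with
    | zero => omega
    | succ j ih =>
      intro i hij hjm
      rcases Nat.lt_succ_iff_lt_or_eq.mp hij with h | rfl
      · obtain ⟨h1, h2⟩ := ih i h (by omega)
        obtain ⟨h3, h4⟩ := hAdj j hjm
        constructor
        · calc F i * F (j+1) = F i * (F j * F (j+1)) := by rw [h3]
            _ = F i * F j * F (j+1) := (mul_assoc ..).symm
            _ = F j * F (j+1) := by rw [h1]
            _ = F (j+1) := h3
        · calc F (j+1) * F i = F (j+1) * F j * F i := by rw [h4]
            _ = F (j+1) * (F j * F i) := mul_assoc ..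
            _ = F (j+1) * F j := by rw [h2]
            _ = F (j+1) := h4
      · exact hAdj i hjm
  have hNe : ∀ i j : ℕ, i < j → j < m → F j ≠ F i := by
    intro i j hij hjm heq
    have h1 : P (c' i) (F i) := (hInv i (by omega)).2.2
    have h1' : P (c' i) (F j) := by rw [heq]; exact h1
    have h2 : P (F j) (c' j) := (hInv j hjm).2.1
    exact (hc' i j hij hjm).2 (hPt _ _ _ h1' h2)
  refine ⟨fun i => F i.val, fun i j hij => ?_⟩
  have hij' : (i : ℕ) < (j : ℕ) := hij
  obtain ⟨hA, hB⟩ := hPair j i hij' j.isLt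
  exact ⟨(hInv j j.isLt).1, (hInv i i.isLt).1, hA, hB, hNe i j hij' j.isLt⟩



lemma inf_R (a b : S) (h2 : ¬ leR b a)
    (hu : ∃ u w : S, u * (b * w) = b ∧ leR (b * w) a) :
    ∀ m : ℕ, m ∈ chainLengths (ltR (S := S)) := by
  obtain ⟨u, w, key, hwa⟩ := hu
  obtain ⟨x, hx0, hxs⟩ : ∃ x : ℕ → S, x 0 = b ∧ ∀ n, x (n + 1) = x n * w :=
    ⟨fun n => Nat.rec b (fun _ xn => xn * w) n, rfl, fun n => rfl⟩
  have L1 : ∀ n, u * x (n + 1) = x n := by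
    intro n
    induction n with
    | zero => rw [hxs 0, hx0]; exact key
    | succ n ih => rw [hxs (n+1), ← mul_assoc, ih]; exact (hxs n).symm
  have L2 : ∀ n d, leR (x (n + d)) (x n) := by
    intro n d
    induction d with
    | zero => exact Or.inl rfl
    | succ d ih => exact leR_trans (Or.inr ⟨w, hxs (n + d)⟩) ih
  have L3 : ∀ n d, leR (x n) (x (n + d)) → leR b (x d) := by
    intro n
    induction n with
    | zero =>
      intro d h
      rw [Nat.zero_add] at h
      rwa [hx0] at h
    | succ n ih =>
      intro d h
      apply ih d
      have hidx : n + 1 + d = (n + d) + 1 := by omega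
      rw [hidx] at h
      rcases h with h | ⟨t, h⟩
      · refine Or.inl ?_
        calc x n = u * x (n + 1) := (L1 n).symm
          _ = u * x ((n + d) + 1) := by rw [h]
          _ = x (n + d) := L1 (n + d)
      · refine Or.inr ⟨t, ?_⟩
        calc x n = u * x (n + 1) := (L1 n).symm
          _ = u * (x ((n + d) + 1) * t) := by rw [h]
          _ = u * x ((n + d) + 1) * t := (mul_assoc ..).symm
          _ = x (n + d) * t := by rw [L1 (n + d)]
  intro m
  refine ⟨fun i => x i.val, fun i j hij => ?_⟩
  have hij' : (i : ℕ) < (j : ℕ) := hij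
  have hj : (j : ℕ) = (i : ℕ) + ((j : ℕ) - (i : ℕ)) := by omega
  show ltR (x (j : ℕ)) (x (i : ℕ))
  constructor
  · rw [hj]; exact L2 _ _
  · intro hcon
    rw [hj] at hcon
    have hb : leR b (x ((j : ℕ) - (i : ℕ))) := L3 _ _ hcon
    have hd1 : (j : ℕ) - (i : ℕ) = 1 + ((j : ℕ) - (i : ℕ) - 1) := by omega
    have h1 : leR (x ((j : ℕ) - (i : ℕ))) (x 1) := by rw [hd1]; exact L2 1 _
    have hwa' : leR (x 1) a := by rw [hxs 0, hx0]; exact hwa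
    exact h2 (leR_trans (leR_trans hb h1) hwa')

lemma inf_L (a b : S) (h2 : ¬ leL b a)
    (hu : ∃ u w : S, (w * b) * u = b ∧ leL (w * b) a) :
    ∀ m : ℕ, m ∈ chainLengths (ltL (S := S)) := by
  obtain ⟨u, w, key, hwa⟩ := hu
  obtain ⟨x, hx0, hxs⟩ : ∃ x : ℕ → S, x 0 = b ∧ ∀ n, x (n + 1) = w * x n :=
    ⟨fun n => Nat.rec b (fun _ xn => w * xn) n, rfl, fun n => rfl⟩
  have L1 : ∀ n, x (n + 1) * u = x n := by
    intro n
    induction n with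
    | zero => rw [hxs 0, hx0]; exact key
    | succ n ih => rw [hxs (n+1), mul_assoc, ih]; exact (hxs n).symm
  have L2 : ∀ n d, leL (x (n + d)) (x n) := by
    intro n d
    induction d with
    | zero => exact Or.inl rfl
    | succ d ih => exact leL_trans (Or.inr ⟨w, hxs (n + d)⟩) ih
  have L3 : ∀ n d, leL (x n) (x (n + d)) → leL b (x d) := by
    intro n
    induction n with
    | zero =>
      intro d h
      rw [Nat.zero_add] at h
      rwa [hx0] at h
    | succ n ih =>
      intro d h
      apply ih d
      have hidx : n + 1 + d = (n + d) + 1 := by omega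
      rw [hidx] at h
      rcases h with h | ⟨t, h⟩
      · refine Or.inl ?_
        calc x n = x (n + 1) * u := (L1 n).symm
          _ = x ((n + d) + 1) * u := by rw [h]
          _ = x (n + d) := L1 (n + d)
      · refine Or.inr ⟨t, ?_⟩
        calc x n = x (n + 1) * u := (L1 n).symm
          _ = (t * x ((n + d) + 1)) * u := by rw [h]
          _ = t * (x ((n + d) + 1) * u) := mul_assoc ..
          _ = t * x (n + d) := by rw [L1 (n + d)]
  intro m
  refine ⟨fun i => x i.val, fun i j hij => ?_⟩
  have hij' : (i : ℕ) < (j : ℕ) := hij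
  have hj : (j : ℕ) = (i : ℕ) + ((j : ℕ) - (i : ℕ)) := by omega
  show ltL (x (j : ℕ)) (x (i : ℕ))
  constructor
  · rw [hj]; exact L2 _ _
  · intro hcon
    rw [hj] at hcon
    have hb : leL b (x ((j : ℕ) - (i : ℕ))) := L3 _ _ hcon
    have hd1 : (j : ℕ) - (i : ℕ) = 1 + ((j : ℕ) - (i : ℕ) - 1) := by omega
    have h1 : leL (x ((j : ℕ) - (i : ℕ))) (x 1) := by rw [hd1]; exact L2 1 _
    have hwa' : leL (x 1) a := by rw [hxs 0, hx0]; exact hwa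
    exact h2 (leL_trans (leL_trans hb h1) hwa')

lemma inf_R_chain {a b : S} (h1 : leR a b) (h2 : ¬ leR b a) (h3 : leJ b a) :
    ∀ m : ℕ, m ∈ chainLengths (ltR (S := S)) := by
  rcases h1 with rfl | ⟨s, hs⟩
  · exact absurd (Or.inl rfl) h2
  rcases h3 with rfl | ⟨u, hu⟩ | ⟨v, hv⟩ | ⟨u, v, huv⟩
  · exact absurd (Or.inl rfl) h2
  · exact inf_R a b h2 ⟨u, s, by rw [← hs]; exact hu.symm, Or.inl hs.symm⟩
  · exact absurd (Or.inr ⟨v, hv⟩) h2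
  · refine inf_R a b h2 ⟨u, s * v, ?_, Or.inr ⟨v, ?_⟩⟩
    · rw [← mul_assoc b s v, ← hs, ← mul_assoc]
      exact huv.symm
    · rw [← mul_assoc, ← hs]

lemma inf_L_chain {a b : S} (h1 : leL a b) (h2 : ¬ leL b a) (h3 : leJ b a) :
    ∀ m : ℕ, m ∈ chainLengths (ltL (S := S)) := by
  rcases h1 with rfl | ⟨s, hs⟩
  · exact absurd (Or.inl rfl) h2
  rcases h3 with rfl | ⟨u, hu⟩ | ⟨v, hv⟩ | ⟨u, v, huv⟩
  · exact absurd (Or.inl rfl) h2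
  · exact absurd (Or.inr ⟨u, hu⟩) h2
  · exact inf_L a b h2 ⟨v, s, by rw [← hs]; exact hv.symm, Or.inl hs.symm⟩
  · refine inf_L a b h2 ⟨v, u * s, ?_, Or.inr ⟨u, ?_⟩⟩
    · rw [mul_assoc u s b, ← hs]
      exact huv.symm
    · rw [mul_assoc, ← hs]



lemma chainL_sub_E (hreg : Regular S) :
    ∀ m : ℕ, m ∈ chainLengths (ltL (S := S)) → m ∈ chainLengths (ltE (S := S)) := by
  intro m hm
  exact chain_to_E leL (fun _ _ _ => leL_trans) (hmkL hreg) hstepL m hm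

lemma chainR_sub_E (hreg : Regular S) :
    ∀ m : ℕ, m ∈ chainLengths (ltR (S := S)) → m ∈ chainLengths (ltE (S := S)) := by
  intro m hm
  exact chain_to_E leR (fun _ _ _ => leR_trans) (hmkR hreg) hstepR m hm

lemma chainJ_sub_E (hreg : Regular S) :
    ∀ m : ℕ, m ∈ chainLengths (ltJ (S := S)) → m ∈ chainLengths (ltE (S := S)) := by
  intro m hm
  exact chain_to_E leJ (fun _ _ _ => leJ_trans_s18) (hmkJ hreg) hstepJ m hm

lemma chainH_sub_E (hreg : Regular S) :
    ∀ m : ℕ, m ∈ chainLengths (ltH (S := S)) → m ∈ chainLengths (ltE (S := S)) := by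
  intro m hm
  obtain ⟨c, hc⟩ := hm
  by_cases hJ : ∀ i j : Fin m, i < j → ¬ leJ (c i) (c j)
  · refine chainJ_sub_E hreg m ⟨c, fun i j hij => ⟨?_, hJ i j hij⟩⟩
    exact leJ_of_leL (hc i j hij).1.1
  · push_neg at hJ
    obtain ⟨i, j, hij, hJij⟩ := hJ
    have hH := hc i j hij
    by_cases hL : leL (c i) (c j)
    · have hR : ¬ leR (c i) (c j) := fun hR => hH.2 ⟨hL, hR⟩
      exact chainR_sub_E hreg m (inf_R_chain hH.1.2 hR hJij m)
    · exact chainL_sub_E hreg m (inf_L_chain hH.1.1 hL hJij m)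

end Aux

lemma heightOf_le {T U : Type u} {lt1 : T → T → Prop} {lt2 : U → U → Prop}
    (h : ∀ m : ℕ, m ∈ chainLengths lt1 → m ∈ chainLengths lt2) :
    heightOf lt1 ≤ heightOf lt2 := by
  refine iSup₂_le fun m hm => ?_
  exact le_iSup₂ (f := fun (m : ℕ) (_ : m ∈ chainLengths lt2) => (m : ℕ∞)) m (h m hm)

lemma chainLengths_mono {T : Type u} {lt1 lt2 : T → T → Prop}
    (h : ∀ a b : T, lt1 a b → lt2 a b) :
    ∀ m : ℕ, m ∈ chainLengths lt1 → m ∈ chainLengths lt2 := by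
  rintro m ⟨c, hc⟩
  exact ⟨c, fun i j hij => h _ _ (hc i j hij)⟩

/-- For a regular semigroup the `L`-, `R`-, `H`- and `E`-heights
coincide, and they are at least the `J`-height. -/
theorem regular_heights (S : Type u) [Semigroup S] (hreg : Regular S) :
    HL S = HR S ∧ HL S = HH S ∧ HL S = HE S ∧ HJ S ≤ HE S := by
  have hLE : HL S ≤ HE S := heightOf_le (chainL_sub_E hreg)
  have hRE : HR S ≤ HE S := heightOf_le (chainR_sub_E hreg)
  have hHE : HH S ≤ HE S := heightOf_le (chainH_sub_E hreg)
  have hJE : HJ S ≤ HE S := heightOf_le (chainJ_sub_E hreg)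
  have hEL : HE S ≤ HL S := heightOf_le (chainLengths_mono fun _ _ h => ltE_imp_ltL h)
  have hER : HE S ≤ HR S := heightOf_le (chainLengths_mono fun _ _ h => ltE_imp_ltR h)
  have hEH : HE S ≤ HH S := heightOf_le (chainLengths_mono fun _ _ h => ltE_imp_ltH h)
  exact ⟨le_antisymm (hLE.trans hER) (hRE.trans hEL),
    le_antisymm (hLE.trans hEH) (hHE.trans hEL),
    le_antisymm hLE hEL, hJE⟩

end GreenHeights
end
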